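/- With notation as in the previous items, the ideal of Λ[y₁,...,yₙ] generated by the elements p_k(c|y) for k ≥ n equals the ideal generated by the elements p̃_k(h|y) for k ≥ n. -/

import Mathlib

/-- Substitution of a power series `g` with zero constant term into `F`. -/
noncomputable def substS {R : Type*} [CommRing R] (g F : PowerSeries R) : PowerSeries R :=
  PowerSeries.mk fun n =>
    ∑ k ∈ Finset.range (n + 1), PowerSeries.coeff k F * PowerSeries.coeff n (g ^ k)

/-- The ring `Λ[y₁,…,yₙ]`: `X (inl k)` is `c_k` (`k ≥ 1`), `X (inr i)` is `y_{i+1}`. -/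
abbrev Lam (n : ℕ) := MvPolynomial (ℕ ⊕ Fin n) ℤ

noncomputable def cL (n : ℕ) : ℕ → Lam n :=
  fun k => if k = 0 then 1 else MvPolynomial.X (.inl k)

noncomputable def yL (n : ℕ) : Fin n → Lam n := fun i => MvPolynomial.X (.inr i)

/-- `y₀ = yₙ`. -/
noncomputable def y0L (n : ℕ) : Lam n :=
  if h : 0 < n then yL n ⟨n - 1, Nat.sub_lt h one_pos⟩ else 0

/-- `C(t) = Σ c_k t^k`. -/
noncomputable def CL (n : ℕ) : PowerSeries (Lam n) := PowerSeries.mk (cL n)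

/-- `t/(1 - y₀t)`. -/
noncomputable def gL (n : ℕ) : PowerSeries (Lam n) :=
  PowerSeries.mk fun m => if m = 0 then 0 else y0L n ^ (m - 1)

/-- `H(t) = C(t/(1-y₀t))`. -/
noncomputable def HL (n : ℕ) : PowerSeries (Lam n) := substS (gL n) (CL n)

/-- `E(t) = Π_{i=1}^n (1 + y_i t)`. -/
noncomputable def EL (n : ℕ) : PowerSeries (Lam n) :=
  ∏ i : Fin n, (1 + PowerSeries.C (yL n i) * PowerSeries.X)

/-- `Ẽ(t) = Π_{i=1}^n (1 + (y_i - y₀) t)`. -/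
noncomputable def EtL (n : ℕ) : PowerSeries (Lam n) :=
  ∏ i : Fin n, (1 + PowerSeries.C (yL n i - y0L n) * PowerSeries.X)

/-!
Put `u = 1 - y₀t` and `g = t/u`, so that `H = C ∘ g`. Since `u² g' = 1`, the chain rule turns the
logarithmic derivative of `H` into `u⁻² (A ∘ g)`, where `A` is that of `C`, and
`u (1 + y_i g) = 1 + (y_i - y₀) t` gives `Ẽ = uⁿ (E ∘ g)`. Hence the generating series `P`, `P̃` of
the two families satisfy `u² P̃ = uⁿ (P ∘ g)`, and, because `t/(1 + y₀t)` inverts `g`, the same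
relation holds with the roles of `P`, `P̃` exchanged and `y₀` replaced by `-y₀`. In
`u⁻² uⁿ (P ∘ g)` the terms coming from `p_k` with `k < n` are `p_k t^{k-1} u^{n-k-1}`, polynomials
of degree `≤ n - 2`, so the coefficients of `P̃` in degrees `≥ n - 1` lie in the ideal generated by
the `p_k`, `k ≥ n`.
-/

namespace PowerSeries
variable {R : Type*} [CommRing R]

theorem coeff_pow_eq_zero_of_lt {g : R⟦X⟧} (hg : constantCoeff g = 0) {m k : ℕ} (h : m < k) :
    coeff m (g ^ k) = 0 :=
  coeff_of_lt_order _ ((Nat.cast_lt.2 h).trans_le (le_order_pow_of_constantCoeff_eq_zero k hg))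

theorem coeff_subst_eq_sum_range {g : R⟦X⟧} (hg : constantCoeff g = 0) (F : R⟦X⟧) {m N : ℕ}
    (h : m < N) :
    coeff m (F.subst g) = ∑ k ∈ Finset.range N, coeff k F * coeff m (g ^ k) := by
  rw [coeff_subst' (HasSubst.of_constantCoeff_zero' hg)]
  refine finsum_eq_sum_of_support_subset _ fun k hk => ?_
  by_contra hkN
  exact hk (by simp only [coeff_pow_eq_zero_of_lt hg (show m < k by simp at hkN; omega), smul_zero])

theorem coeff_mul_subst {g : R⟦X⟧} (hg : constantCoeff g = 0) (W F : R⟦X⟧) (m : ℕ) :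
    coeff m (W * F.subst g) = ∑ k ∈ Finset.range (m + 1), coeff k F * coeff m (W * g ^ k) := by
  simp only [coeff_mul _ W, Finset.mul_sum]
  rw [Finset.sum_comm]
  refine Finset.sum_congr rfl fun p hp => ?_
  rw [coeff_subst_eq_sum_range hg F
    (Nat.lt_succ_of_le (Finset.HasAntidiagonal.antidiagonal.snd_le hp)), Finset.mul_sum]
  exact Finset.sum_congr rfl fun k _ => by ring

theorem substS_eq_subst {g : R⟦X⟧} (hg : constantCoeff g = 0) (F : R⟦X⟧) :
    substS g F = F.subst g := by
  ext m
  rw [substS, coeff_mk, coeff_subst_eq_sum_range hg F m.lt_succ_self]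

/-- `X / (1 - y X)`. -/
noncomputable def mobius (y : R) : R⟦X⟧ := mk fun m => if m = 0 then 0 else y ^ (m - 1)

theorem constantCoeff_mobius (y : R) : constantCoeff (mobius y) = 0 := by
  simp [mobius, ← coeff_zero_eq_constantCoeff_apply]

theorem hasSubst_mobius (y : R) : HasSubst (mobius y) :=
  HasSubst.of_constantCoeff_zero' (constantCoeff_mobius y)

theorem one_sub_mul_mobius (y : R) : (1 - C y * X) * mobius y = X := by
  ext (_ | _ | m) <;> simp [mobius, sub_mul, mul_assoc, coeff_X, pow_succ']

theorem isUnit_one_sub_C_mul_X (y : R) : IsUnit (1 - C y * X : R⟦X⟧) :=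
  isUnit_iff_constantCoeff.2 (by simp)

theorem one_sub_sq_mul_derivative_mobius (y : R) :
    (1 - C y * X) ^ 2 * d⁄dX R (mobius y) = 1 := by
  have h := congrArg (d⁄dX R) (one_sub_mul_mobius y)
  simp only [Derivation.leibniz, map_sub, Derivation.map_one_eq_zero, derivative_C,
    derivative_X, smul_eq_mul] at h
  linear_combination (1 - C y * X) * h + C y * one_sub_mul_mobius y

theorem one_sub_sq_mul_derivative_subst_mobius (y : R) (F : R⟦X⟧) :
    (1 - C y * X) ^ 2 * d⁄dX R (F.subst (mobius y)) = (d⁄dX R F).subst (mobius y) := by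
  rw [derivative_subst (hasSubst_mobius y)]
  linear_combination (d⁄dX R F).subst (mobius y) * one_sub_sq_mul_derivative_mobius y

theorem one_sub_mul_subst_mobius (y a : R) :
    (1 - C y * X) * (1 + C a * X).subst (mobius y) = 1 + C (a - y) * X := by
  rw [← coe_substAlgHom (hasSubst_mobius y)]
  simp only [map_add, map_one, map_mul, substAlgHom_X]
  have hC : substAlgHom (hasSubst_mobius y) (C a) = C a := (substAlgHom _).commutes a
  rw [hC, map_sub]
  linear_combination C a * one_sub_mul_mobius y

theorem one_sub_neg_mul_subst_mobius_neg (y : R) :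
    (1 - C (-y) * X) * (1 - C y * X).subst (mobius (-y)) = 1 := by
  simpa [sub_eq_add_neg] using one_sub_mul_subst_mobius (-y) (-y)

theorem subst_mobius_neg_mobius (y : R) : (mobius y).subst (mobius (-y)) = X := by
  have h := congrArg (subst (mobius (-y))) (one_sub_mul_mobius y)
  rw [subst_mul (hasSubst_mobius (-y)), subst_X (hasSubst_mobius (-y))] at h
  linear_combination (1 - C (-y) * X) * h
    - (mobius y).subst (mobius (-y)) * one_sub_neg_mul_subst_mobius_neg y + one_sub_mul_mobius (-y)

theorem subst_mobius_neg_subst_mobius (y : R) (F : R⟦X⟧) :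
    subst (mobius (-y)) (F.subst (mobius y)) = F := by
  rw [subst_comp_subst_apply (hasSubst_mobius y) (hasSubst_mobius (-y)),
    subst_mobius_neg_mobius, X_subst]

theorem prod_one_add_C_sub_mul_X {ι : Type*} (s : Finset ι) (a : ι → R) (y : R) :
    ∏ i ∈ s, (1 + C (a i - y) * X) =
      (1 - C y * X) ^ s.card * (∏ i ∈ s, (1 + C (a i) * X)).subst (mobius y) := by
  rw [← coe_substAlgHom (hasSubst_mobius y), map_prod, ← Finset.prod_const,
    ← Finset.prod_mul_distrib]
  exact Finset.prod_congr rfl fun i _ => by rw [coe_substAlgHom, one_sub_mul_subst_mobius]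

theorem one_sub_sq_mul_logDeriv_subst_mobius (y : R) {F A B : R⟦X⟧} (hF : IsUnit F)
    (hA : A * F = d⁄dX R F)
    (hB : B * F.subst (mobius y) = d⁄dX R (F.subst (mobius y))) :
    (1 - C y * X) ^ 2 * B = A.subst (mobius y) := by
  have hFg : IsUnit (F.subst (mobius y)) := by
    simpa [coe_substAlgHom] using hF.map (substAlgHom (R := R) (hasSubst_mobius y))
  refine hFg.mul_right_cancel ?_
  rw [mul_assoc, hB, one_sub_sq_mul_derivative_subst_mobius, ← hA,
    subst_mul (hasSubst_mobius y)]

theorem one_sub_sq_mul_eq_symm (y : R) (n : ℕ) {P Q : R⟦X⟧}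
    (h : (1 - C y * X) ^ 2 * P = (1 - C y * X) ^ n * Q.subst (mobius y)) :
    (1 - C (-y) * X) ^ 2 * Q = (1 - C (-y) * X) ^ n * P.subst (mobius (-y)) := by
  have hs := congrArg (subst (mobius (-y))) h
  rw [subst_mul (hasSubst_mobius (-y)), subst_mul (hasSubst_mobius (-y)),
    subst_pow (hasSubst_mobius (-y)), subst_pow (hasSubst_mobius (-y)),
    subst_mobius_neg_subst_mobius] at hs
  have hu2 := congrArg (· ^ 2) (one_sub_neg_mul_subst_mobius_neg y)
  have hun := congrArg (· ^ n) (one_sub_neg_mul_subst_mobius_neg y)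
  simp only [one_pow, mul_pow] at hu2 hun
  linear_combination (-(1 - C (-y) * X) ^ (n + 2)) * hs
    + (1 - C (-y) * X) ^ n * P.subst (mobius (-y)) * hu2 - (1 - C (-y) * X) ^ 2 * Q * hun

theorem coeff_one_sub_C_mul_X_pow_of_lt (y : R) {i j : ℕ} (h : j < i) :
    coeff i ((1 - C y * X) ^ j) = 0 := by
  have hp : ((1 - C y * X) ^ j : R⟦X⟧) =
      ((1 - Polynomial.C y * Polynomial.X) ^ j : Polynomial R) := by
    push_cast; rfl
  rw [hp, Polynomial.coeff_coe]
  refine Polynomial.coeff_eq_zero_of_natDegree_lt (lt_of_le_of_lt ?_ h)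
  compute_degree

theorem coeff_mem_of_one_sub_sq_mul_eq (y : R) (n : ℕ) {P Q : R⟦X⟧} {I : Ideal R}
    (h : (1 - C y * X) ^ 2 * P = (1 - C y * X) ^ n * Q.subst (mobius y))
    (hQ : ∀ j, n ≤ j + 1 → coeff j Q ∈ I) {m : ℕ} (hm : n ≤ m + 1) : coeff m P ∈ I := by
  obtain ⟨u, hu⟩ := isUnit_one_sub_C_mul_X y
  have hinv : (↑u⁻¹ : R⟦X⟧) * (1 - C y * X) = 1 := by rw [← hu, Units.inv_mul]
  have hP : P = (↑u⁻¹ : R⟦X⟧) ^ 2 * (1 - C y * X) ^ n * Q.subst (mobius y) := by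
    rw [mul_assoc, ← h, ← mul_assoc, ← mul_pow, hinv, one_pow, one_mul]
  rw [hP, coeff_mul_subst (constantCoeff_mobius y)]
  refine Ideal.sum_mem _ fun k _ => ?_
  by_cases hk : n ≤ k + 1
  · exact I.mul_mem_right _ (hQ k hk)
  · obtain ⟨r, rfl⟩ : ∃ r, n = k + 2 + r := ⟨n - (k + 2), by omega⟩
    have hW : (↑u⁻¹ : R⟦X⟧) ^ 2 * (1 - C y * X) ^ (k + 2 + r) * mobius y ^ k
        = X ^ k * (1 - C y * X) ^ r :=
      calc (↑u⁻¹ : R⟦X⟧) ^ 2 * (1 - C y * X) ^ (k + 2 + r) * mobius y ^ k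
          = (↑u⁻¹ * (1 - C y * X)) ^ 2 * ((1 - C y * X) * mobius y) ^ k
            * (1 - C y * X) ^ r := by rw [mul_pow _ _ k, pow_add, pow_add]; ring
        _ = X ^ k * (1 - C y * X) ^ r := by rw [hinv, one_sub_mul_mobius]; ring
    rw [hW, coeff_X_pow_mul', if_pos (by omega),
      coeff_one_sub_C_mul_X_pow_of_lt y (by omega), mul_zero]
    exact I.zero_mem

theorem span_coeff_le_of_one_sub_sq_mul_eq (y : R) {n : ℕ} (hn : 0 < n) {p q : ℕ → R}
    (h : (1 - C y * X) ^ 2 * mk (fun j => p (j + 1)) =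
      (1 - C y * X) ^ n * (mk fun j => q (j + 1)).subst (mobius y)) :
    Ideal.span {x | ∃ k, n ≤ k ∧ x = p k} ≤ Ideal.span {x | ∃ k, n ≤ k ∧ x = q k} := by
  rw [Ideal.span_le]
  rintro _ ⟨k, hk, rfl⟩
  obtain ⟨j, rfl⟩ : ∃ j, k = j + 1 := ⟨k - 1, by omega⟩
  simpa using coeff_mem_of_one_sub_sq_mul_eq (I := Ideal.span {x | ∃ k, n ≤ k ∧ x = q k})
    y n h (fun i hi => Ideal.subset_span ⟨i + 1, hi, by simp⟩) hk

end PowerSeries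

/-- The ideal of `Λ[y₁,…,yₙ]` generated by the `p_k(c|y)`, `k ≥ n`, equals the ideal
generated by the `p̃_k(h|y)`, `k ≥ n`. -/
theorem stmt8 (n : ℕ) (hn : 0 < n) (p pt pcy phy : ℕ → Lam n)
    (hp : (PowerSeries.mk fun j => p (j + 1)) * CL n = (CL n).derivativeFun)
    (hpt : (PowerSeries.mk fun j => pt (j + 1)) * HL n = (HL n).derivativeFun)
    (hpcy : (PowerSeries.mk fun j => pcy (j + 1)) =
      (PowerSeries.mk fun j => p (j + 1)) * EL n)
    (hphy : (PowerSeries.mk fun j => phy (j + 1)) =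
      (PowerSeries.mk fun j => pt (j + 1)) * EtL n) :
    Ideal.span {x : Lam n | ∃ k, n ≤ k ∧ x = pcy k} =
      Ideal.span {x : Lam n | ∃ k, n ≤ k ∧ x = phy k} := by
  open PowerSeries in
  set y := y0L n
  have hH : HL n = (CL n).subst (mobius y) := substS_eq_subst (constantCoeff_mobius y) (CL n)
  have hEt : EtL n = (1 - C y * X) ^ n * (EL n).subst (mobius y) := by
    rw [EtL, EL, prod_one_add_C_sub_mul_X, Finset.card_univ, Fintype.card_fin]
  have hCL : IsUnit (CL n) :=
    isUnit_iff_constantCoeff.2 (by simp [CL, cL, ← coeff_zero_eq_constantCoeff_apply])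
  have hpt' := one_sub_sq_mul_logDeriv_subst_mobius y hCL hp (by rwa [hH] at hpt)
  have key : (1 - C y * X) ^ 2 * mk (fun j => phy (j + 1)) =
      (1 - C y * X) ^ n * (mk fun j => pcy (j + 1)).subst (mobius y) := by
    rw [hphy, hpcy, subst_mul (hasSubst_mobius y), hEt, ← hpt']
    ring
  exact le_antisymm
    (span_coeff_le_of_one_sub_sq_mul_eq (-y) hn (one_sub_sq_mul_eq_symm y n key))
    (span_coeff_le_of_one_sub_sq_mul_eq y hn key)
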